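/- Invariance of the kernel along an orbit (the fact, following Corollary 5, that ker M(C, P) does not vary with the Euler system C): let G be a simple graph on a finite vertex set V, t a transition function on V, and v₁, …, v_k a finite sequence of vertices. Define G₀ = G, t₀ = t, and G_i = (G_{i-1})^{v_i}, t_i = (t_{i-1})^{G_{i-1}, v_i} for 1 ≤ i ≤ k. Then the right null space of M(G_k, t_k) over GF(2) equals the right null space of M(G, t), and the two matrices have the same rank over GF(2). -/

import Mathlib

open scoped Classical

/-- The three transitions at a vertex, labeled relative to an Euler system. -/
inductive Transition : Type
  | phi | chi | psi
  deriving DecidableEq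

variable {V : Type*} [Fintype V] [DecidableEq V]

/-- Simple local complement `G^v`: toggle adjacency between distinct neighbors of `v`. -/
def localComp (G : SimpleGraph V) (v : V) : SimpleGraph V where
  Adj u w := u ≠ w ∧ Xor' (G.Adj u w) (G.Adj v u ∧ G.Adj v w)
  symm := by
    constructor
    rintro u w ⟨hne, hx⟩
    refine ⟨hne.symm, ?_⟩
    rw [G.adj_comm w u, and_comm]
    exact hx
  loopless := by constructor; rintro u ⟨hne, _⟩; exact hne rfl

/-- Modified interlacement matrix `M(G, t)` over GF(2). -/
noncomputable def Mmat (G : SimpleGraph V) (t : V → Transition) : Matrix V V (ZMod 2) :=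
  Matrix.of fun w u =>
    if w = u then (if t u = Transition.chi then 0 else 1)
    else if t u = Transition.phi then 0
    else if G.Adj w u then 1 else 0

/-- Updated transition function `t^{G,v}`. -/
noncomputable def updT (G : SimpleGraph V) (v : V) (t : V → Transition) : V → Transition :=
  fun u =>
    if u = v then
      match t u with
      | Transition.phi => Transition.psi
      | Transition.psi => Transition.phi
      | Transition.chi => Transition.chi
    else if G.Adj v u then
      match t u with
      | Transition.chi => Transition.psi
      | Transition.psi => Transition.chi
      | Transition.phi => Transition.phi
    else t u

/-- Modified local complement of a matrix, taken with respect to `G` at `v`: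
add row `v` to the row of every neighbor of `v` in `G`. -/
noncomputable def modLC (G : SimpleGraph V) (v : V) (M : Matrix V V (ZMod 2)) :
    Matrix V V (ZMod 2) :=
  Matrix.of fun w u => if G.Adj v w then M w u + M v u else M w u

/-- One κ-step at `v` applied to a graph together with a transition function:
`(G, t) ↦ (G^v, t^{G,v})`. -/
noncomputable def stepGT (v : V) (p : SimpleGraph V × (V → Transition)) :
    SimpleGraph V × (V → Transition) :=
  (localComp p.1 v, updT p.1 v p.2)

/-! Column `u` of `M(G, t)` is `e_u`, `A_u` or `A_u + e_u` according as `t u` is `φ`, `χ` or `ψ`.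
Checking the columns `u = v`, `u ∈ N(v)` and `u ∉ N(v) ∪ {v}` separately shows that passing from
`(G, t)` to `(G^v, t^{G,v})` adds row `v` of `M(G, t)` to every row indexed by a neighbour of `v`.
Such a row operation preserves the kernel, and equal kernels give equal ranks by rank–nullity. -/

open Matrix

theorem Matrix.rank_eq_of_mulVec_eq_zero_iff {m n K : Type*} [Fintype n] [Field K]
    {A B : Matrix m n K} (h : ∀ x, A *ᵥ x = 0 ↔ B *ᵥ x = 0) : A.rank = B.rank := by
  have hker : LinearMap.ker A.mulVecLin = LinearMap.ker B.mulVecLin := Submodule.ext h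
  have hA := A.mulVecLin.finrank_range_add_finrank_ker
  rw [hker, ← B.mulVecLin.finrank_range_add_finrank_ker] at hA
  exact Nat.add_right_cancel hA

omit [Fintype V] [DecidableEq V] in
theorem localComp_adj {G : SimpleGraph V} {v w u : V} :
    (localComp G v).Adj w u ↔ w ≠ u ∧ Xor (G.Adj w u) (G.Adj v w ∧ G.Adj v u) := Iff.rfl

theorem Transition.eq_phi_or_eq_chi_or_eq_psi (x : Transition) :
    x = .phi ∨ x = .chi ∨ x = .psi := by
  cases x <;> simp

omit [Fintype V] in
theorem Mmat_localComp_updT (G : SimpleGraph V) (v : V) (t : V → Transition) :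
    Mmat (localComp G v) (updT G v t) = modLC G v (Mmat G t) := by
  ext w u
  simp only [Mmat, modLC, Matrix.of_apply, updT, localComp_adj]
  by_cases hvu : v = u
  · subst hvu
    rcases (t v).eq_phi_or_eq_chi_or_eq_psi with htv | htv | htv <;>
      by_cases hwv : w = v <;> by_cases hw : G.Adj v w <;>
      simp_all [G.adj_comm, xor_def, CharTwo.add_self_eq_zero]
  have huv : u ≠ v := Ne.symm hvu
  by_cases hu : G.Adj v u
  · rcases (t u).eq_phi_or_eq_chi_or_eq_psi with htu | htu | htu <;>
      by_cases hwu : w = u <;> by_cases hwv : w = v <;> by_cases hw : G.Adj v w <;>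
      by_cases ha : G.Adj w u <;> simp_all [xor_def, CharTwo.add_self_eq_zero]
  · rcases (t u).eq_phi_or_eq_chi_or_eq_psi with htu | htu | htu <;>
      by_cases hwu : w = u <;> by_cases hw : G.Adj v w <;> by_cases ha : G.Adj w u <;>
      simp_all [xor_def]

omit [DecidableEq V] in
theorem mulVec_modLC_apply (G : SimpleGraph V) (v : V) (M : Matrix V V (ZMod 2))
    (x : V → ZMod 2) (w : V) :
    (modLC G v M *ᵥ x) w = (M *ᵥ x) w + if G.Adj v w then (M *ᵥ x) v else 0 := by
  by_cases hw : G.Adj v w <;>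
    simp [hw, modLC, Matrix.mulVec, dotProduct, add_mul, Finset.sum_add_distrib]

omit [DecidableEq V] in
theorem mulVec_modLC_eq_zero_iff (G : SimpleGraph V) (v : V) (M : Matrix V V (ZMod 2))
    (x : V → ZMod 2) : modLC G v M *ᵥ x = 0 ↔ M *ᵥ x = 0 := by
  refine ⟨fun h => ?_, fun h => funext fun w => by simp [mulVec_modLC_apply, h]⟩
  -- row `v` itself is left unchanged, since `v` is not its own neighbour
  have hv : (M *ᵥ x) v = 0 := by simpa [mulVec_modLC_apply] using congrFun h v
  funext w
  simpa [mulVec_modLC_apply, hv] using congrFun h w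

theorem mulVec_Mmat_foldl_stepGT_eq_zero_iff (vs : List V)
    (p : SimpleGraph V × (V → Transition)) (x : V → ZMod 2) :
    Mmat (vs.foldl (fun q v => stepGT v q) p).1 (vs.foldl (fun q v => stepGT v q) p).2 *ᵥ x = 0 ↔
      Mmat p.1 p.2 *ᵥ x = 0 := by
  induction vs generalizing p with
  | nil => rfl
  | cons v vs ih =>
    rw [List.foldl_cons, ih, stepGT, Mmat_localComp_updT, mulVec_modLC_eq_zero_iff]

/-- invariance of the kernel along a κ-orbit: with `G₀ = G`, `t₀ = t`,
`G_i = G_{i-1}^{v_i}`, `t_i = t_{i-1}^{G_{i-1},v_i}`, the matrices `M(G_k, t_k)` and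
`M(G, t)` have the same right null space and the same rank over GF(2). -/
theorem ker_rank_orbit (G : SimpleGraph V) (t : V → Transition) (vs : List V) :
    let p := vs.foldl (fun q v => stepGT v q) (G, t)
    {x : V → ZMod 2 | (Mmat p.1 p.2).mulVec x = 0} =
      {x : V → ZMod 2 | (Mmat G t).mulVec x = 0} ∧
    (Mmat p.1 p.2).rank = (Mmat G t).rank := by
  intro p
  have hker := mulVec_Mmat_foldl_stepGT_eq_zero_iff vs (G, t)
  exact ⟨Set.ext hker, Matrix.rank_eq_of_mulVec_eq_zero_iff hker⟩
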